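/- Let s(z) = ∑_{n≥1} s_n z^n be the unique formal power series solution with s_1 = 1 of the functional equation s(z) = z + σ(s(z)), where σ(z) = z²(2−z)/(1−z)² = ∑_{n≥2} n z^n. Then the coefficients satisfy the recurrence s_1 = 1 and s_n = ∑_{m=2}^n m ∑_{n_1+⋯+n_m=n, n_i≥1} s_{n_1}⋯s_{n_m}, and there exist positive constants γ_1, γ_2 such that |s_n| ≤ γ_1 γ_2^n for all n ≥ 1. -/

import Mathlib

/-!
Compare `s` with the shifted Catalan numbers `c n = catalan (n - 1)`: their generating function
`C` satisfies `C = z + C²`, so `C ^ m ≤ C` coefficientwise for every `m ≥ 1`. By strong induction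
`|s n| ≤ 8 ^ (n - 1) * c n`, since the `m`-th term of the recurrence is then at most
`m * 8 ^ (n - m) * c n` and `∑_{m ≥ 2} m * 8 ^ (1 - m) ≤ 1`. Finally `c n ≤ 4 ^ n`.
-/

open Finset

/-- Sums over `m`-tuples of positive integers summing to `n` (compositions of `n` into `m` parts). -/
def comps (m n : ℕ) : Finset (Fin m → ℕ) :=
  (Finset.Nat.antidiagonalTuple m n).filter fun t => ∀ i, 1 ≤ t i

lemma mem_comps {m n : ℕ} {t : Fin m → ℕ} :
    t ∈ comps m n ↔ ∑ i, t i = n ∧ ∀ i, 1 ≤ t i := by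
  simp [comps, Finset.Nat.mem_antidiagonalTuple]

lemma comps_one_subset (n : ℕ) : comps 1 n ⊆ {fun _ => n} := by
  intro t ht
  rw [mem_singleton]
  funext i
  simpa [Subsingleton.elim i 0] using (mem_comps.1 ht).1

lemma lt_of_mem_comps {m n : ℕ} (hm : 2 ≤ m) {t : Fin m → ℕ} (ht : t ∈ comps m n) (i : Fin m) :
    t i < n := by
  obtain ⟨hsum, hpos⟩ := mem_comps.1 ht
  have : Nontrivial (Fin m) := Fin.nontrivial_iff_two_le.2 hm
  obtain ⟨j, hji⟩ := exists_ne i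
  rw [← hsum]
  exact single_lt_sum hji (mem_univ i) (mem_univ j) (hpos j) fun k _ _ => Nat.zero_le _

section Semiring

variable {R : Type*} [CommSemiring R]

lemma sum_comps_succ (f : ℕ → R) (m n : ℕ) :
    ∑ t ∈ comps (m + 1) n, ∏ i, f (t i) =
      ∑ a ∈ Icc 1 n, f a * ∑ u ∈ comps m (n - a), ∏ i, f (u i) := by
  simp_rw [mul_sum]
  rw [sum_sigma']
  refine sum_nbij' (fun t => ⟨t 0, Fin.tail t⟩) (fun p => Fin.cons p.1 p.2) ?_ ?_
    (fun t _ => Fin.cons_self_tail t) (fun p _ => by simp) (fun t _ => Fin.prod_univ_succ _)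
  · intro t ht
    obtain ⟨hsum, hpos⟩ := mem_comps.1 ht
    rw [Fin.sum_univ_succ] at hsum
    simp only [mem_sigma, mem_Icc, mem_comps]
    exact ⟨⟨hpos 0, by omega⟩, by simp only [Fin.tail]; omega, fun i => hpos i.succ⟩
  · rintro ⟨a, u⟩ hp
    simp only [mem_sigma, mem_Icc, mem_comps] at hp ⊢
    obtain ⟨⟨ha, han⟩, hsum, hpos⟩ := hp
    refine ⟨by rw [Fin.sum_univ_succ]; simp only [Fin.cons_zero, Fin.cons_succ]; omega, ?_⟩
    exact Fin.cases (by simpa using ha) (fun j => by simpa using hpos j)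

lemma sum_comps_prod_mul_pow (a r : R) (w : ℕ → R) {m n : ℕ} :
    ∑ t ∈ comps m n, ∏ i, a * r ^ t i * w (t i) =
      a ^ m * r ^ n * ∑ t ∈ comps m n, ∏ i, w (t i) := by
  rw [mul_sum]
  refine sum_congr rfl fun t ht => ?_
  rw [prod_mul_distrib, prod_mul_distrib, prod_const, card_univ, Fintype.card_fin,
    prod_pow_eq_pow_sum, (mem_comps.1 ht).1]

end Semiring

lemma abs_sum_prod_le_sum_prod {f g : ℕ → ℝ} {m : ℕ} {S : Finset (Fin m → ℕ)}
    (hfg : ∀ t ∈ S, ∀ i, |f (t i)| ≤ g (t i)) :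
    |∑ t ∈ S, ∏ i, f (t i)| ≤ ∑ t ∈ S, ∏ i, g (t i) := by
  refine (abs_sum_le_sum_abs _ _).trans (sum_le_sum fun t ht => ?_)
  rw [abs_prod]
  exact prod_le_prod (fun i _ => abs_nonneg _) fun i _ => hfg t ht i

section OrderedSemiring

variable {R : Type*} [CommSemiring R] [PartialOrder R] [IsOrderedRing R]

/-- With `W = ∑ w n X ^ n`, this says that `W ^ 2 ≤ W` coefficientwise implies
`W ^ (m + 1) ≤ W` coefficientwise. -/
theorem sum_comps_prod_le {w : ℕ → R} (hw : ∀ n, 0 ≤ w n)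
    (hconv : ∀ n, ∑ p ∈ antidiagonal n, w p.1 * w p.2 ≤ w n) (m n : ℕ) :
    ∑ t ∈ comps (m + 1) n, ∏ i, w (t i) ≤ w n := by
  induction m generalizing n with
  | zero =>
    calc ∑ t ∈ comps 1 n, ∏ i, w (t i) ≤ ∑ t ∈ {fun _ => n}, ∏ i : Fin 1, w (t i) :=
          sum_le_sum_of_subset_of_nonneg (comps_one_subset n)
            fun t _ _ => prod_nonneg fun i _ => hw _
      _ = w n := by simp
  | succ m ih =>
    calc ∑ t ∈ comps (m + 2) n, ∏ i, w (t i)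
        = ∑ a ∈ Icc 1 n, w a * ∑ u ∈ comps (m + 1) (n - a), ∏ i, w (u i) := sum_comps_succ w _ n
      _ ≤ ∑ a ∈ Icc 1 n, w a * w (n - a) :=
          sum_le_sum fun a _ => mul_le_mul_of_nonneg_left (ih _) (hw a)
      _ ≤ ∑ a ∈ range (n + 1), w a * w (n - a) :=
          sum_le_sum_of_subset_of_nonneg (fun a ha => by simp only [mem_Icc, mem_range] at ha ⊢; omega)
            fun a _ _ => mul_nonneg (hw _) (hw _)
      _ = ∑ p ∈ antidiagonal n, w p.1 * w p.2 :=
          (Nat.sum_antidiagonal_eq_sum_range_succ (fun a b => w a * w b) n).symm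
      _ ≤ w n := hconv n

end OrderedSemiring

def shiftedCatalan : ℕ → ℕ
  | 0 => 0
  | n + 1 => catalan n

lemma sum_antidiagonal_shiftedCatalan_le (n : ℕ) :
    ∑ p ∈ antidiagonal n, shiftedCatalan p.1 * shiftedCatalan p.2 ≤ shiftedCatalan n := by
  rcases n with _ | _ | n
  · simp [shiftedCatalan]
  · simp [shiftedCatalan, Nat.sum_antidiagonal_succ]
  · rw [Nat.sum_antidiagonal_succ, Nat.sum_antidiagonal_succ']
    simp [shiftedCatalan, catalan_succ']

lemma shiftedCatalan_le_four_pow (n : ℕ) : shiftedCatalan n ≤ 4 ^ n := by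
  rcases n with _ | n
  · simp [shiftedCatalan]
  · calc catalan n ≤ (n + 1) * catalan n := Nat.le_mul_of_pos_left _ n.succ_pos
      _ = n.centralBinom := succ_mul_catalan_eq_centralBinom n
      _ ≤ 4 ^ n := Nat.centralBinom_le_four_pow n
      _ ≤ 4 ^ (n + 1) := Nat.pow_le_pow_right (by norm_num) n.le_succ

lemma sum_Icc_two_mul_eighth_pow_le (n : ℕ) : ∑ m ∈ Icc 2 n, (m : ℝ) * (1 / 8) ^ m ≤ 1 / 8 := by
  calc ∑ m ∈ Icc 2 n, (m : ℝ) * (1 / 8) ^ m ≤ ∑ m ∈ Ico 2 (n + 1), (1 / 4 : ℝ) ^ m := by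
        rw [Ico_add_one_right_eq_Icc]
        refine sum_le_sum fun m _ => ?_
        have hm : (m : ℝ) ≤ 2 ^ m := by exact_mod_cast Nat.lt_two_pow_self.le
        calc (m : ℝ) * (1 / 8) ^ m ≤ 2 ^ m * (1 / 8) ^ m := by gcongr
          _ = (1 / 4) ^ m := by rw [← mul_pow]; norm_num
    _ ≤ (1 / 4) ^ 2 / (1 - 1 / 4) := geom_sum_Ico_le_of_lt_one (by norm_num) (by norm_num)
    _ ≤ 1 / 8 := by norm_num

theorem abs_le_shiftedCatalan_of_recurrence (s : ℕ → ℝ) (hs1 : s 1 = 1)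
    (hrec : ∀ n : ℕ, 2 ≤ n →
      s n = ∑ m ∈ Icc 2 n, (m : ℝ) * ∑ t ∈ comps m n, ∏ i, s (t i))
    (n : ℕ) (hn : 1 ≤ n) : |s n| ≤ 1 / 8 * 8 ^ n * shiftedCatalan n := by
  induction n using Nat.strong_induction_on with
  | _ n ih =>
  rcases hn.eq_or_lt with rfl | hn2
  · simp [hs1, shiftedCatalan]
  set c : ℕ → ℝ := fun k => shiftedCatalan k
  have hc : ∀ m, ∑ t ∈ comps (m + 1) n, ∏ i, c (t i) ≤ c n := fun m =>
    sum_comps_prod_le (fun _ => Nat.cast_nonneg _)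
      (fun k => by exact_mod_cast sum_antidiagonal_shiftedCatalan_le k) m n
  have hterm : ∀ m ∈ Icc 2 n,
      |(m : ℝ) * ∑ t ∈ comps m n, ∏ i, s (t i)| ≤ m * (1 / 8) ^ m * (8 ^ n * c n) := by
    intro m hm
    obtain ⟨k, rfl⟩ : ∃ k, m = k + 1 := ⟨m - 1, by have := (mem_Icc.1 hm).1; omega⟩
    have hparts : ∀ t ∈ comps (k + 1) n, ∀ i, |s (t i)| ≤ 1 / 8 * 8 ^ t i * c (t i) :=
      fun t ht i => ih _ (lt_of_mem_comps (mem_Icc.1 hm).1 ht i) ((mem_comps.1 ht).2 i)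
    calc |((k + 1 : ℕ) : ℝ) * ∑ t ∈ comps (k + 1) n, ∏ i, s (t i)|
        = (k + 1 : ℕ) * |∑ t ∈ comps (k + 1) n, ∏ i, s (t i)| := by rw [abs_mul, Nat.abs_cast]
      _ ≤ (k + 1 : ℕ) * ∑ t ∈ comps (k + 1) n, ∏ i, (1 / 8 * 8 ^ t i * c (t i)) := by
          gcongr; exact abs_sum_prod_le_sum_prod (g := fun k => 1 / 8 * 8 ^ k * c k) hparts
      _ = (k + 1 : ℕ) * ((1 / 8) ^ (k + 1) * 8 ^ n * ∑ t ∈ comps (k + 1) n, ∏ i, c (t i)) := by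
          rw [sum_comps_prod_mul_pow]
      _ ≤ (k + 1 : ℕ) * ((1 / 8) ^ (k + 1) * 8 ^ n * c n) := by gcongr; exact hc k
      _ = (k + 1 : ℕ) * (1 / 8) ^ (k + 1) * (8 ^ n * c n) := by ring
  calc |s n| = |∑ m ∈ Icc 2 n, (m : ℝ) * ∑ t ∈ comps m n, ∏ i, s (t i)| := by rw [hrec n hn2]
    _ ≤ ∑ m ∈ Icc 2 n, |(m : ℝ) * ∑ t ∈ comps m n, ∏ i, s (t i)| := abs_sum_le_sum_abs _ _
    _ ≤ ∑ m ∈ Icc 2 n, m * (1 / 8 : ℝ) ^ m * (8 ^ n * c n) := sum_le_sum hterm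
    _ = (∑ m ∈ Icc 2 n, m * (1 / 8 : ℝ) ^ m) * (8 ^ n * c n) := by rw [sum_mul]
    _ ≤ 1 / 8 * (8 ^ n * c n) := by gcongr; exact sum_Icc_two_mul_eighth_pow_le n
    _ = 1 / 8 * 8 ^ n * c n := by ring

theorem stmt0 (s : ℕ → ℝ)
    (heq : ∀ n : ℕ, 1 ≤ n → s n = (if n = 1 then (1 : ℝ) else 0) +
      ∑ m ∈ Finset.Icc 2 n, (m : ℝ) * ∑ t ∈ comps m n, ∏ i, s (t i)) :
    s 1 = 1 ∧
    (∀ n : ℕ, 2 ≤ n →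
      s n = ∑ m ∈ Finset.Icc 2 n, (m : ℝ) * ∑ t ∈ comps m n, ∏ i, s (t i)) ∧
    ∃ γ₁ > (0 : ℝ), ∃ γ₂ > (0 : ℝ), ∀ n : ℕ, 1 ≤ n → |s n| ≤ γ₁ * γ₂ ^ n := by
  have hs1 : s 1 = 1 := by simpa using heq 1 le_rfl
  have hrec : ∀ n : ℕ, 2 ≤ n →
      s n = ∑ m ∈ Finset.Icc 2 n, (m : ℝ) * ∑ t ∈ comps m n, ∏ i, s (t i) :=
    fun n hn => by simpa [show n ≠ 1 by omega] using heq n (by omega)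
  refine ⟨hs1, hrec, 1 / 8, by norm_num, 32, by norm_num, fun n hn => ?_⟩
  calc |s n| ≤ 1 / 8 * 8 ^ n * shiftedCatalan n :=
        abs_le_shiftedCatalan_of_recurrence s hs1 hrec n hn
    _ ≤ 1 / 8 * 8 ^ n * 4 ^ n := by gcongr; exact_mod_cast shiftedCatalan_le_four_pow n
    _ = 1 / 8 * 32 ^ n := by rw [mul_assoc, ← mul_pow]; norm_num
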